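/- arXiv:2507.03429 — 3 statements merged into one kernel-verified Lean document; each statement's English description precedes it below -/
import Mathlib

section
/- Let v : [ρ₀, ∞) → (0, ∞) be a C¹ decreasing function with 1 < p < q, and suppose there are constants κ > 0, ρ₁ ≥ ρ₀ such that (−v'(s))^{p−1} ≥ κ v(s)^{q−1} s for all s ≥ ρ₁. Then there exists κ̃ > 0 such that v(s) ≤ κ̃ s^{−p/(q−p)} for all sufficiently large s. -/
/-!
With `e = (q - 1)/(p - 1) > 1`, the function `u = v ^ (1 - e)` linearizes the differential
inequality: taking `(p - 1)`-th roots, `-v' ≥ κ^{1/(p-1)} v^e s^{1/(p-1)}`, hence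
`u' = (e - 1) v^{-e} (-v') ≥ (e - 1) κ^{1/(p-1)} s^{1/(p-1)}`. Integrating, `u` eventually
dominates a multiple of `s^{p/(p-1)}`, and since `1 - e = -(q - p)/(p - 1) < 0` this inverts to
`v ≤ κ̃ s^{-p/(q-p)}`.
-/

open Real Filter

theorem exists_mul_rpow_le_of_hasDerivAt {u u' : ℝ → ℝ} {a c β : ℝ} (ha : 0 < a) (hc : 0 < c)
    (hβ : 0 < β) (hu : ∀ s, a ≤ s → HasDerivAt u (u' s) s)
    (hu' : ∀ s, a ≤ s → c * s ^ (β - 1) ≤ u' s) :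
    ∃ c' > 0, ∀ᶠ s in atTop, c' * s ^ β ≤ u s := by
  set g : ℝ → ℝ := fun s => u s - c / β * s ^ β
  have hg : ∀ s, a ≤ s → HasDerivAt g (u' s - c * s ^ (β - 1)) s := fun s hs => by
    refine ((hu s hs).sub ((hasDerivAt_rpow_const (p := β)
      (Or.inl (ha.trans_le hs).ne')).const_mul (c / β))).congr_deriv ?_
    field_simp
  have hmono : MonotoneOn g (Set.Ici a) :=
    monotoneOn_of_hasDerivWithinAt_nonneg (convex_Ici a)
      (fun s hs => (hg s hs).continuousAt.continuousWithinAt)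
      (fun s hs => (hg s (le_of_lt (by simpa using hs))).hasDerivWithinAt)
      (fun s hs => sub_nonneg.2 (hu' s (le_of_lt (by simpa using hs))))
  have hgrow : Tendsto (fun s : ℝ => c / (2 * β) * s ^ β) atTop atTop :=
    (tendsto_rpow_atTop hβ).const_mul_atTop (by positivity)
  refine ⟨c / (2 * β), by positivity, ?_⟩
  filter_upwards [hgrow.eventually_ge_atTop (-g a), eventually_ge_atTop a] with s hgs has
  have hga : g a ≤ g s := hmono Set.self_mem_Ici has has
  have hsplit : c / β * s ^ β = 2 * (c / (2 * β) * s ^ β) := by field_simp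
  simp only [g] at hga hgs
  linarith

theorem mul_rpow_inv_le_rpow_neg_mul {x y s κ r e : ℝ} (hx : 0 < x) (hy : 0 ≤ y) (hs : 0 ≤ s)
    (hκ : 0 ≤ κ) (hr : 0 < r) (h : κ * x ^ (e * r) * s ≤ y ^ r) :
    κ ^ r⁻¹ * s ^ r⁻¹ ≤ x ^ (-e) * y := by
  have hroot : (κ * x ^ (e * r) * s) ^ r⁻¹ ≤ y :=
    (rpow_inv_le_iff_of_pos (by positivity) hy hr).2 h
  rw [mul_rpow (by positivity) hs, mul_rpow hκ (by positivity), ← rpow_mul hx.le,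
    mul_inv_cancel_right₀ hr.ne'] at hroot
  calc κ ^ r⁻¹ * s ^ r⁻¹ = x ^ (-e) * (κ ^ r⁻¹ * x ^ e * s ^ r⁻¹) := by
        rw [rpow_neg hx.le]; field_simp
    _ ≤ x ^ (-e) * y := by gcongr

theorem exists_mul_rpow_le_rpow_of_rpow_le_rpow_neg_deriv {p q a κ : ℝ} {v v' : ℝ → ℝ}
    (hp : 1 < p) (hpq : p < q) (ha : 0 < a) (hκ : 0 < κ)
    (hderiv : ∀ s, a ≤ s → HasDerivAt v (v' s) s) (hpos : ∀ s, a ≤ s → 0 < v s)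
    (hdec : ∀ s, a ≤ s → v' s ≤ 0)
    (hkey : ∀ s, a ≤ s → κ * v s ^ (q - 1) * s ≤ (-v' s) ^ (p - 1)) :
    ∃ c > 0, ∀ᶠ s in atTop, c * s ^ (p / (p - 1)) ≤ v s ^ (1 - (q - 1) / (p - 1)) := by
  have hr : 0 < p - 1 := by linarith
  set e := (q - 1) / (p - 1) with he
  have he1 : 0 < e - 1 := by rw [he, lt_sub_iff_add_lt, zero_add, one_lt_div hr]; linarith
  have hu : ∀ s, a ≤ s → HasDerivAt (fun s => v s ^ (1 - e)) ((e - 1) * (v s ^ (-e) * -v' s)) s :=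
    fun s hs => by
      convert (hderiv s hs).rpow_const (p := 1 - e) (Or.inl (hpos s hs).ne') using 1
      ring_nf
  have hu' : ∀ s, a ≤ s → (e - 1) * κ ^ (p - 1)⁻¹ * s ^ (p / (p - 1) - 1)
      ≤ (e - 1) * (v s ^ (-e) * -v' s) := fun s hs => by
    have hexp : p / (p - 1) - 1 = (p - 1)⁻¹ := by field_simp; ring
    rw [hexp, mul_assoc]
    refine mul_le_mul_of_nonneg_left (mul_rpow_inv_le_rpow_neg_mul (hpos s hs)
      (neg_nonneg.2 (hdec s hs)) (ha.trans_le hs).le hκ.le hr ?_) he1.le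
    rw [he, div_mul_cancel₀ _ hr.ne']
    exact hkey s hs
  exact exists_mul_rpow_le_of_hasDerivAt ha (by positivity) (div_pos (by linarith) hr) hu hu'

theorem le_mul_rpow_of_mul_rpow_le_rpow {x c s β γ : ℝ} (hx : 0 < x) (hc : 0 < c) (hs : 0 < s)
    (hγ : γ < 0) (h : c * s ^ β ≤ x ^ γ) : x ≤ c ^ γ⁻¹ * s ^ (β / γ) := by
  rw [div_eq_mul_inv, rpow_mul hs.le, ← mul_rpow hc.le (by positivity)]
  exact (le_rpow_inv_iff_of_neg hx (by positivity) hγ).2 h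

theorem stmt_12_general (p q ρ₀ ρ₁ κ : ℝ) (hp : 1 < p) (hpq : p < q)
    (hρ : ρ₀ ≤ ρ₁) (hρ₀ : 0 < ρ₀) (hκ : 0 < κ)
    (v v' : ℝ → ℝ)
    (hderiv : ∀ s, ρ₀ ≤ s → HasDerivAt v (v' s) s)
    (hpos : ∀ s, ρ₀ ≤ s → 0 < v s)
    (hdec : ∀ s, ρ₀ ≤ s → v' s ≤ 0)
    (hkey : ∀ s, ρ₁ ≤ s → κ * v s ^ (q - 1) * s ≤ (-(v' s)) ^ (p - 1)) :
    ∃ κ' : ℝ, 0 < κ' ∧ ∃ s₀ : ℝ, ∀ s, s₀ ≤ s → v s ≤ κ' * s ^ (-(p / (q - p))) := by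
  have hr : 0 < p - 1 := by linarith
  have hρ₁ : 0 < ρ₁ := hρ₀.trans_le hρ
  obtain ⟨c, hc, hgrowth⟩ := exists_mul_rpow_le_rpow_of_rpow_le_rpow_neg_deriv hp hpq hρ₁ hκ
    (fun s hs => hderiv s (hρ.trans hs)) (fun s hs => hpos s (hρ.trans hs))
    (fun s hs => hdec s (hρ.trans hs)) hkey
  obtain ⟨s₀, hs₀⟩ := eventually_atTop.1 (hgrowth.and (eventually_ge_atTop ρ₁))
  have hγ : 1 - (q - 1) / (p - 1) < 0 := by
    rw [sub_neg, one_lt_div hr]; linarith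
  have hexp : p / (p - 1) / (1 - (q - 1) / (p - 1)) = -(p / (q - p)) := by
    rw [one_sub_div hr.ne', div_div_div_cancel_right₀ hr.ne',
      show p - 1 - (q - 1) = -(q - p) by ring, div_neg]
  refine ⟨c ^ (1 - (q - 1) / (p - 1))⁻¹, by positivity, s₀, fun s hs => ?_⟩
  obtain ⟨hle, hs₁⟩ := hs₀ s hs
  rw [← hexp]
  exact le_mul_rpow_of_mul_rpow_le_rpow (hpos s (hρ.trans hs₁)) hc (hρ₁.trans_le hs₁) hγ hle

/-- ODE comparison step of the decay estimate. If `v > 0` is `C¹` and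
decreasing on `[ρ₀,∞)`, `1 < p < q`, and `(−v'(s))^{p−1} ≥ κ v(s)^{q−1} s` for
`s ≥ ρ₁`, then `v(s) ≤ κ̃ s^{−p/(q−p)}` for all large `s`. -/
theorem stmt_12 (p q ρ₀ ρ₁ κ : ℝ) (hp : 1 < p) (hpq : p < q)
    (hρ : ρ₀ ≤ ρ₁) (hρ₀ : 0 < ρ₀) (hκ : 0 < κ)
    (v v' : ℝ → ℝ)
    (hderiv : ∀ s, ρ₀ ≤ s → HasDerivAt v (v' s) s)
    (hcont : ContinuousOn v' (Set.Ici ρ₀))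
    (hpos : ∀ s, ρ₀ ≤ s → 0 < v s)
    (hdec : ∀ s, ρ₀ ≤ s → v' s ≤ 0)
    (hkey : ∀ s, ρ₁ ≤ s → κ * v s ^ (q - 1) * s ≤ (-(v' s)) ^ (p - 1)) :
    ∃ κ' : ℝ, 0 < κ' ∧ ∃ s₀ : ℝ, ∀ s, s₀ ≤ s → v s ≤ κ' * s ^ (-(p / (q - p))) :=
  stmt_12_general p q ρ₀ ρ₁ κ hp hpq hρ hρ₀ hκ v v' hderiv hpos hdec hkey
end

section
/- Let 1 < p < q < r, and let v : [ρ₀, ∞) → (0, δ) be a C¹ function solving (s^{N−1}(−v')^{p−1})' = s^{N−1}(v^{q−1} − v^{r−1}) with v' < 0 on (ρ₀, ∞), where δ ∈ (0,1) is small enough that t^{q−1} − t^{r−1} ≥ (1/2) t^{q−1} for t ∈ (0, δ). Then there exist c > 0 and ρ₁ > ρ₀ such that s^{N−1}(−v'(s))^{p−1} ≥ c v(s)^{q−1} s^N for all s ≥ ρ₁. -/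
open Real

/-- integrating the radial ODE
`(s^{N−1}(−v')^{p−1})' = s^{N−1}(v^{q−1} − v^{r−1})` for a small positive decreasing
solution gives `s^{N−1}(−v'(s))^{p−1} ≥ c v(s)^{q−1} s^N` for large `s`. -/
theorem stmt_13 (N : ℕ) (p q r ρ₀ δ : ℝ) (hN : 2 ≤ N)
    (hp : 1 < p) (hpq : p < q) (hqr : q < r)
    (hρ₀ : 0 < ρ₀) (hδ0 : 0 < δ) (hδ1 : δ < 1)
    (hδ : ∀ t : ℝ, t ∈ Set.Ioo (0 : ℝ) δ → (1 / 2) * t ^ (q - 1) ≤ t ^ (q - 1) - t ^ (r - 1))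
    (v v' : ℝ → ℝ)
    (hderiv : ∀ s, ρ₀ < s → HasDerivAt v (v' s) s)
    (hneg : ∀ s, ρ₀ < s → v' s < 0)
    (hrange : ∀ s, ρ₀ ≤ s → v s ∈ Set.Ioo (0 : ℝ) δ)
    (hODE : ∀ s, ρ₀ < s →
      HasDerivAt (fun t => t ^ ((N : ℝ) - 1) * (-(v' t)) ^ (p - 1))
        (s ^ ((N : ℝ) - 1) * (v s ^ (q - 1) - v s ^ (r - 1))) s) :
    ∃ c : ℝ, 0 < c ∧ ∃ ρ₁ : ℝ, ρ₀ < ρ₁ ∧ ∀ s, ρ₁ ≤ s →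
      c * v s ^ (q - 1) * s ^ (N : ℝ) ≤ s ^ ((N : ℝ) - 1) * (-(v' s)) ^ (p - 1) := by
  have hN0 : (0:ℝ) < (N:ℝ) := by exact_mod_cast Nat.lt_of_lt_of_le Nat.zero_lt_two hN
  set ρ : ℝ := ρ₀ + 1 with hρdef
  have hρρ₀ : ρ₀ < ρ := by simp [hρdef]
  have hρpos : 0 < ρ := by linarith
  refine ⟨1/(4*(N:ℝ)), by positivity, 2*ρ, by nlinarith, ?_⟩
  intro s hs
  have hsρ : ρ < s := by nlinarith
  have hsρ₀ : ρ₀ < s := lt_trans hρρ₀ hsρ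
  have hs0 : 0 < s := lt_trans hρpos hsρ
  -- v is antitone on (ρ₀, ∞)
  have hanti : AntitoneOn v (Set.Ioi ρ₀) := by
    apply antitoneOn_of_deriv_nonpos (convex_Ioi ρ₀)
    · intro x hx; exact (hderiv x hx).continuousAt.continuousWithinAt
    · intro x hx
      rw [interior_Ioi] at hx
      exact ((hderiv x hx).differentiableAt).differentiableWithinAt
    · intro x hx
      rw [interior_Ioi] at hx
      rw [(hderiv x hx).deriv]
      exact (hneg x hx).le
  have hvs := hrange s hsρ₀.le
  have hvs0 : 0 < v s := hvs.1
  have hvq : (0:ℝ) ≤ v s ^ (q - 1) := Real.rpow_nonneg hvs0.le _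
  -- monotone auxiliary function H t = N * F t - (v s ^ (q-1) / 2) * t ^ N
  have hmono : MonotoneOn (fun t : ℝ =>
      (N:ℝ) * (t ^ ((N : ℝ) - 1) * (-(v' t)) ^ (p - 1)) - (v s ^ (q - 1) / 2) * t ^ (N:ℝ))
      (Set.Icc ρ s) := by
    have hd : ∀ t ∈ Set.Ioo ρ s, HasDerivAt (fun t : ℝ =>
        (N:ℝ) * (t ^ ((N : ℝ) - 1) * (-(v' t)) ^ (p - 1)) - (v s ^ (q - 1) / 2) * t ^ (N:ℝ))
        ((N:ℝ) * (t ^ ((N : ℝ) - 1) * (v t ^ (q - 1) - v t ^ (r - 1)))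
          - (v s ^ (q - 1) / 2) * ((N:ℝ) * t ^ ((N:ℝ) - 1))) t := by
      intro t ht
      have ht0 : (0:ℝ) < t := lt_trans hρpos ht.1
      have htρ₀ : ρ₀ < t := lt_trans hρρ₀ ht.1
      exact ((hODE t htρ₀).const_mul (N:ℝ)).sub
        ((Real.hasDerivAt_rpow_const (Or.inl ht0.ne')).const_mul (v s ^ (q - 1) / 2))
    apply monotoneOn_of_deriv_nonneg (convex_Icc ρ s)
    · intro x hx
      have hx0 : ρ₀ < x := lt_of_lt_of_le hρρ₀ hx.1
      have hx1 : (0:ℝ) < x := lt_of_lt_of_le hρpos hx.1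
      exact (((hODE x hx0).const_mul (N:ℝ)).sub
        ((Real.hasDerivAt_rpow_const (Or.inl hx1.ne')).const_mul
          (v s ^ (q - 1) / 2))).continuousAt.continuousWithinAt
    · intro x hx
      rw [interior_Icc] at hx
      exact ((hd x hx).differentiableAt).differentiableWithinAt
    · intro x hx
      rw [interior_Icc] at hx
      rw [(hd x hx).deriv]
      have hx0 : (0:ℝ) < x := lt_trans hρpos hx.1
      have hxρ₀ : ρ₀ < x := lt_trans hρρ₀ hx.1
      have hvx := hrange x hxρ₀.le
      have hvxs : v s ≤ v x := hanti (Set.mem_Ioi.2 hxρ₀) (Set.mem_Ioi.2 hsρ₀) hx.2.le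
      have h1 : v s ^ (q - 1) ≤ v x ^ (q - 1) :=
        Real.rpow_le_rpow hvs0.le hvxs (by linarith)
      have h2 : (1/2) * v x ^ (q - 1) ≤ v x ^ (q - 1) - v x ^ (r - 1) := hδ _ hvx
      have hxp : (0:ℝ) ≤ x ^ ((N:ℝ) - 1) := Real.rpow_nonneg hx0.le _
      have : v s ^ (q - 1) / 2 ≤ v x ^ (q - 1) - v x ^ (r - 1) := by linarith
      nlinarith [mul_nonneg hxp (sub_nonneg.2 this), mul_nonneg hN0.le (mul_nonneg hxp (sub_nonneg.2 this))]
  have hH := hmono (Set.left_mem_Icc.2 hsρ.le) (Set.right_mem_Icc.2 hsρ.le) hsρ.le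
  simp only at hH
  -- F ρ ≥ 0
  have hFρ : (0:ℝ) ≤ ρ ^ ((N : ℝ) - 1) * (-(v' ρ)) ^ (p - 1) :=
    mul_nonneg (Real.rpow_nonneg hρpos.le _)
      (Real.rpow_nonneg (by linarith [hneg ρ hρρ₀]) _)
  -- s^N ≥ 2 ρ^N
  have hpowcast : ∀ x : ℝ, 0 ≤ x → x ^ ((N:ℕ):ℝ) = x ^ (N:ℕ) := fun x hx =>
    Real.rpow_natCast x N
  have hA2B : 2 * ρ ^ ((N:ℝ)) ≤ s ^ ((N:ℝ)) := by
    rw [Real.rpow_natCast, Real.rpow_natCast]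
    have h1 : (2*ρ)^N ≤ s^N := pow_le_pow_left₀ (by linarith) hs N
    have h2 : (2:ℝ) ≤ 2^N := by
      calc (2:ℝ) = 2^1 := (pow_one 2).symm
      _ ≤ 2^N := pow_le_pow_right₀ (by norm_num) (by omega)
    have h3 : (2*ρ)^N = 2^N * ρ^N := mul_pow 2 ρ N
    nlinarith [pow_nonneg hρpos.le N]
  rw [div_mul_eq_mul_div, div_mul_eq_mul_div, div_le_iff₀ (by positivity : (0:ℝ) < 4*(N:ℝ))]
  nlinarith [mul_nonneg hvq (by linarith : (0:ℝ) ≤ s ^ ((N:ℝ)) - 2 * ρ ^ ((N:ℝ))),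
    mul_nonneg hvq (Real.rpow_nonneg hρpos.le ((N:ℝ)))]
end

section
/- Let u be a radially symmetric, radially decreasing positive solution of −Δ_p u + u^{r−1} = u^{q−1} in ℝ^N with u(x) → 0 as |x| → ∞, where 1 < p < q < r < Np/(N−p). Then there exists c > 0 such that u(x) ≤ c |x|^{−p/(q−p)} for all x ∈ ℝ^N with |x| ≥ 1. -/
/-!
Once `v` is small, the source term satisfies `v^{q-1} - v^{r-1} ≥ v^{q-1}/2`. Integrating the radial
equation over `[σ/2, σ]` and using that `v` is decreasing gives the flux bound
`(-v'(σ))^{p-1} ≥ k σ v(σ)^{q-1}`. This is a Bernoulli-type differential inequality: with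
`δ = (q-p)/(p-1)`, the derivative of `v^{-δ}` is at least a multiple of `σ^{1/(p-1)}`, so
`v^{-δ} ≳ σ^{p/(p-1)}`, i.e. `v(σ) ≲ σ^{-p/(q-p)}`. Monotonicity handles the bounded range of radii.
-/

open Real Set Filter Topology

theorem eventually_rpow_le_two_mul_sub_rpow {v : ℝ → ℝ} {q r : ℝ} (hv : Tendsto v atTop (𝓝 0))
    (hpos : ∀ᶠ t in atTop, 0 < v t) (hqr : q < r) :
    ∀ᶠ t in atTop, v t ^ (q - 1) ≤ 2 * (v t ^ (q - 1) - v t ^ (r - 1)) := by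
  have hrq : 0 < r - q := sub_pos.2 hqr
  have hsmall : ∀ᶠ t in atTop, v t ^ (r - q) ≤ 1 / 2 := by
    have h := hv.rpow_const (Or.inr hrq.le)
    rw [zero_rpow hrq.ne'] at h
    exact h.eventually (ge_mem_nhds (by norm_num))
  filter_upwards [hpos, hsmall] with t ht hts
  have hsplit : v t ^ (r - 1) = v t ^ (q - 1) * v t ^ (r - q) := by
    rw [← rpow_add ht]; ring_nf
  rw [hsplit]
  nlinarith [rpow_nonneg ht.le (q - 1)]

theorem mul_le_of_hasDerivAt_rpow_mul {a m σ : ℝ} {φ g : ℝ → ℝ} (ha : 0 ≤ a) (hσ : 0 < σ)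
    (hderiv : ∀ t ∈ Icc (σ / 2) σ, HasDerivAt (fun t => t ^ a * φ t) (t ^ a * g t) t)
    (hφ : 0 ≤ φ (σ / 2)) (hg : ∀ t ∈ Ioo (σ / 2) σ, m ≤ g t) (hm : 0 ≤ m) :
    (1 / 2) ^ (a + 1) * σ * m ≤ φ σ := by
  have hσ2 : 0 < σ / 2 := half_pos hσ
  have hincr : (σ / 2) ^ a * m * (σ - σ / 2) ≤ σ ^ a * φ σ - (σ / 2) ^ a * φ (σ / 2) := by
    refine (convex_Icc _ _).mul_sub_le_image_sub_of_le_deriv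
      (fun t ht => (hderiv t ht).continuousAt.continuousWithinAt) (fun t ht => ?_) (fun t ht => ?_)
      _ (left_mem_Icc.2 (by linarith)) _ (right_mem_Icc.2 (by linarith)) (by linarith)
    · rw [interior_Icc] at ht
      exact (hderiv t (Ioo_subset_Icc_self ht)).differentiableAt.differentiableWithinAt
    · rw [interior_Icc] at ht
      rw [(hderiv t (Ioo_subset_Icc_self ht)).deriv]
      exact mul_le_mul (rpow_le_rpow hσ2.le ht.1.le ha) (hg t ht) hm
        (rpow_nonneg (hσ2.trans ht.1).le _)
  have hlhs : (1 / 2) ^ (a + 1) * σ * m * σ ^ a = (σ / 2) ^ a * m * (σ - σ / 2) := by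
    rw [div_eq_mul_one_div σ 2, mul_rpow hσ.le (by norm_num), rpow_add_one (by norm_num)]
    ring
  have hφ2 : 0 ≤ (σ / 2) ^ a * φ (σ / 2) := mul_nonneg (rpow_nonneg hσ2.le _) hφ
  refine le_of_mul_le_mul_right ?_ (rpow_pos_of_pos hσ a)
  linarith

theorem mul_rpow_le_neg_deriv_rpow {v v' : ℝ → ℝ} {a p q r s₀ σ : ℝ} (ha : 0 ≤ a) (hq : 1 ≤ q)
    (hs₀ : 0 < s₀) (hσ : 2 * s₀ ≤ σ) (hpos : ∀ t, 0 < t → 0 < v t)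
    (hanti : AntitoneOn v (Ioi 0)) (hdec : ∀ t, 0 < t → v' t ≤ 0)
    (hsrc : ∀ t, s₀ ≤ t → v t ^ (q - 1) ≤ 2 * (v t ^ (q - 1) - v t ^ (r - 1)))
    (hODE : ∀ t, 0 < t → HasDerivAt (fun t => t ^ a * (-v' t) ^ (p - 1))
      (t ^ a * (v t ^ (q - 1) - v t ^ (r - 1))) t) :
    (1 / 2) ^ (a + 1) / 2 * σ * v σ ^ (q - 1) ≤ (-v' σ) ^ (p - 1) := by
  have hσ0 : 0 < σ := by linarith
  calc (1 / 2) ^ (a + 1) / 2 * σ * v σ ^ (q - 1)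
      = (1 / 2) ^ (a + 1) * σ * (v σ ^ (q - 1) / 2) := by ring
    _ ≤ (-v' σ) ^ (p - 1) :=
      mul_le_of_hasDerivAt_rpow_mul (φ := fun t => (-v' t) ^ (p - 1)) ha hσ0
        (fun t ht => hODE t (by linarith [ht.1]))
        (rpow_nonneg (neg_nonneg.2 (hdec _ (by linarith))) _) (fun t ht => ?_)
        (div_nonneg (rpow_nonneg (hpos σ hσ0).le _) zero_le_two)
  have ht0 : 0 < t := by linarith [ht.1]
  have hvt : v σ ^ (q - 1) ≤ v t ^ (q - 1) :=
    rpow_le_rpow (hpos σ hσ0).le (hanti ht0 hσ0 ht.2.le) (by linarith)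
  linarith [hsrc t (by linarith [ht.1])]

theorem mul_sub_le_rpow_of_mul_rpow_le_neg_deriv {v v' : ℝ → ℝ} {k c β s₁ σ : ℝ}
    (hc : c + 1 ≠ 0) (hβ : 1 ≤ β) (hs₁ : 0 < s₁)
    (hderiv : ∀ t, s₁ ≤ t → HasDerivAt v (v' t) t) (hpos : ∀ t, s₁ ≤ t → 0 < v t)
    (h : ∀ t, s₁ ≤ t → k * t ^ c * v t ^ β ≤ -v' t) (hσ : s₁ ≤ σ) :
    (β - 1) * k / (c + 1) * (σ ^ (c + 1) - s₁ ^ (c + 1)) ≤ v σ ^ (1 - β) := by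
  set D := (β - 1) * k / (c + 1) with hD
  have hF : ∀ t, s₁ ≤ t → HasDerivAt (fun t => v t ^ (1 - β) - D * t ^ (c + 1))
      ((β - 1) * (v t ^ (-β) * -v' t - k * t ^ c)) t := by
    intro t ht
    refine (((hderiv t ht).rpow_const (Or.inl (hpos t ht).ne')).sub
      ((hasDerivAt_rpow_const (Or.inl (hs₁.trans_le ht).ne')).const_mul D)).congr_deriv ?_
    rw [show 1 - β - 1 = -β by ring, show c + 1 - 1 = c by ring]
    rw [hD]
    field_simp
    ring
  have hmono : MonotoneOn (fun t => v t ^ (1 - β) - D * t ^ (c + 1)) (Ici s₁) := by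
    refine monotoneOn_of_hasDerivWithinAt_nonneg (convex_Ici s₁)
      (fun t ht => (hF t ht).continuousAt.continuousWithinAt)
      (fun t ht => (hF t (interior_subset ht)).hasDerivWithinAt) (fun t ht => ?_)
    have ht : s₁ ≤ t := interior_subset ht
    have hvt := hpos t ht
    have hk : k * t ^ c = v t ^ (-β) * (k * t ^ c * v t ^ β) := by
      rw [mul_comm (v t ^ (-β)), mul_assoc, ← rpow_add hvt, add_neg_cancel, rpow_zero, mul_one]
    refine mul_nonneg (by linarith) (sub_nonneg.2 ?_)
    rw [hk]
    exact mul_le_mul_of_nonneg_left (h t ht) (rpow_nonneg hvt.le _)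
  have hF₁σ := hmono (mem_Ici.2 le_rfl) (mem_Ici.2 hσ) hσ
  have hv₁ : 0 ≤ v s₁ ^ (1 - β) := rpow_nonneg (hpos s₁ le_rfl).le _
  simp only at hF₁σ
  linarith

theorem mul_rpow_le_of_mul_le_rpow {k t x y p q : ℝ} (hk : 0 ≤ k) (ht : 0 ≤ t) (hx : 0 ≤ x)
    (hy : 0 ≤ y) (hp : 1 < p) (h : k * t * x ^ (q - 1) ≤ y ^ (p - 1)) :
    k ^ (p - 1)⁻¹ * t ^ (p - 1)⁻¹ * x ^ ((q - 1) / (p - 1)) ≤ y := by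
  rw [div_eq_mul_inv, rpow_mul hx, ← mul_rpow hk ht,
    ← mul_rpow (mul_nonneg hk ht) (rpow_nonneg hx _)]
  exact (rpow_inv_le_iff_of_pos (by positivity) hy (by linarith)).2 h

theorem le_mul_rpow_of_mul_rpow_le_rpow_s14 {x t A e β : ℝ} (hx : 0 < x) (ht : 0 < t) (hA : 0 < A)
    (hβ : 1 < β) (h : A * t ^ e ≤ x ^ (1 - β)) :
    x ≤ A ^ (1 - β)⁻¹ * t ^ (e * (1 - β)⁻¹) := by
  calc x = (x ^ (1 - β)) ^ (1 - β)⁻¹ := by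
        rw [← rpow_mul hx.le, mul_inv_cancel₀ (by linarith), rpow_one]
    _ ≤ (A * t ^ e) ^ (1 - β)⁻¹ :=
        rpow_le_rpow_of_nonpos (by positivity) h (inv_nonpos.2 (by linarith))
    _ = A ^ (1 - β)⁻¹ * t ^ (e * (1 - β)⁻¹) := by
        rw [mul_rpow hA.le (by positivity), ← rpow_mul ht.le]

theorem exists_eventually_le_mul_rpow_of_mul_le_neg_deriv_rpow {v v' : ℝ → ℝ} {k p q : ℝ}
    (hk : 0 < k) (hp : 1 < p) (hpq : p < q)
    (hderiv : ∀ᶠ t in atTop, HasDerivAt v (v' t) t) (hpos : ∀ᶠ t in atTop, 0 < v t)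
    (hdec : ∀ᶠ t in atTop, v' t ≤ 0)
    (h : ∀ᶠ t in atTop, k * t * v t ^ (q - 1) ≤ (-v' t) ^ (p - 1)) :
    ∃ C, ∀ᶠ t in atTop, v t ≤ C * t ^ (-(p / (q - p))) := by
  set c := (p - 1)⁻¹ with hc
  set β := (q - 1) / (p - 1) with hβ_def
  have hp1 : 0 < p - 1 := by linarith
  have hβ : 1 < β := (one_lt_div hp1).2 (by linarith)
  obtain ⟨s₁, hs₁⟩ :=
    ((((hderiv.and hpos).and hdec).and h).and (eventually_gt_atTop 0)).exists_forall_of_atTop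
  have hs₁0 : 0 < s₁ := (hs₁ s₁ le_rfl).2
  have hderiv₁ : ∀ t, s₁ ≤ t → HasDerivAt v (v' t) t := fun t ht => (hs₁ t ht).1.1.1.1
  have hpos₁ : ∀ t, s₁ ≤ t → 0 < v t := fun t ht => (hs₁ t ht).1.1.1.2
  have hdec₁ : ∀ t, s₁ ≤ t → v' t ≤ 0 := fun t ht => (hs₁ t ht).1.1.2
  have h₁ : ∀ t, s₁ ≤ t → k ^ c * t ^ c * v t ^ β ≤ -v' t := fun t ht =>
    mul_rpow_le_of_mul_le_rpow hk.le (hs₁0.le.trans ht) (hpos₁ t ht).le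
      (neg_nonneg.2 (hdec₁ t ht)) hp (hs₁ t ht).1.2
  set A := (β - 1) * k ^ c / (c + 1)
  have hA : 0 < A := div_pos (mul_pos (by linarith) (rpow_pos_of_pos hk _)) (by positivity)
  refine ⟨(A / 2) ^ (1 - β)⁻¹, ?_⟩
  filter_upwards [eventually_ge_atTop s₁,
    (tendsto_rpow_atTop (by positivity : 0 < c + 1)).eventually_ge_atTop (2 * s₁ ^ (c + 1))]
    with σ hσ hσc
  have hσ0 : 0 < σ := hs₁0.trans_le hσ
  have hvσ : 0 < v σ := hpos₁ σ hσ
  have hint := mul_sub_le_rpow_of_mul_rpow_le_neg_deriv (by positivity) hβ.le hs₁0 hderiv₁ hpos₁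
    h₁ hσ
  have hlow : A / 2 * σ ^ (c + 1) ≤ v σ ^ (1 - β) := by
    nlinarith [mul_le_mul_of_nonneg_left hσc hA.le]
  have hexp : (c + 1) * (1 - β)⁻¹ = -(p / (q - p)) := by
    have hqp : q - p ≠ 0 := by linarith
    have h1β : 1 - β = -((q - p) / (p - 1)) := by rw [hβ_def]; field_simp; ring
    rw [h1β, hc]
    field_simp
    ring
  exact hexp ▸ le_mul_rpow_of_mul_rpow_le_rpow_s14 hvσ hσ0 (half_pos hA) hβ hlow

theorem exists_pos_forall_le_mul_rpow_of_eventually {v : ℝ → ℝ} {γ C : ℝ} (hγ : 0 ≤ γ)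
    (hanti : AntitoneOn v (Ici 1)) (h : ∀ᶠ t in atTop, v t ≤ C * t ^ (-γ)) :
    ∃ c, 0 < c ∧ ∀ t, 1 ≤ t → v t ≤ c * t ^ (-γ) := by
  obtain ⟨S, hS⟩ := (h.and (eventually_ge_atTop 1)).exists_forall_of_atTop
  have hS1 : 1 ≤ S := (hS S le_rfl).2
  refine ⟨max (max C (|v 1| * S ^ γ)) 1, lt_max_of_lt_right one_pos, fun t ht => ?_⟩
  have htγ : 0 ≤ t ^ (-γ) := rpow_nonneg (by linarith) _
  rcases le_total S t with hSt | htS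
  · exact (hS t hSt).1.trans
      (mul_le_mul_of_nonneg_right (le_max_of_le_left (le_max_left _ _)) htγ)
  · calc v t ≤ |v 1| * S ^ γ * S ^ (-γ) := by
          rw [mul_assoc, ← rpow_add (by linarith), add_neg_cancel, rpow_zero, mul_one]
          exact (hanti (mem_Ici.2 le_rfl) (mem_Ici.2 ht) ht).trans (le_abs_self _)
      _ ≤ |v 1| * S ^ γ * t ^ (-γ) :=
          mul_le_mul_of_nonneg_left (rpow_le_rpow_of_nonpos (by linarith) htS (by linarith))
            (by positivity)
      _ ≤ max (max C (|v 1| * S ^ γ)) 1 * t ^ (-γ) :=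
          mul_le_mul_of_nonneg_right (le_max_of_le_left (le_max_right _ _)) htγ

theorem stmt_14_general (N : ℕ) (p q r : ℝ) (hN : 2 ≤ N)
    (hp1 : 1 < p) (hpq : p < q) (hqr : q < r)
    (u : EuclideanSpace ℝ (Fin N) → ℝ) (v v' : ℝ → ℝ)
    (hrad : ∀ x, u x = v ‖x‖)
    (hderiv : ∀ s, 0 < s → HasDerivAt v (v' s) s)
    (hpos : ∀ s, 0 < s → 0 < v s)
    (hdec : ∀ s, 0 < s → v' s ≤ 0)
    (hlim : Filter.Tendsto v Filter.atTop (nhds 0))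
    (hODE : ∀ s, 0 < s →
      HasDerivAt (fun t => t ^ ((N : ℝ) - 1) * (-(v' t)) ^ (p - 1))
        (s ^ ((N : ℝ) - 1) * (v s ^ (q - 1) - v s ^ (r - 1))) s) :
    ∃ c : ℝ, 0 < c ∧ ∀ x : EuclideanSpace ℝ (Fin N), 1 ≤ ‖x‖ →
      u x ≤ c * ‖x‖ ^ (-(p / (q - p))) := by
  have ha : (0 : ℝ) ≤ N - 1 := by
    have : (2 : ℝ) ≤ N := by exact_mod_cast hN
    linarith
  have hanti : AntitoneOn v (Ioi 0) :=
    antitoneOn_of_hasDerivWithinAt_nonpos (convex_Ioi 0)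
      (fun t ht => (hderiv t ht).continuousAt.continuousWithinAt)
      (fun t ht => (hderiv t (interior_subset ht)).hasDerivWithinAt)
      (fun t ht => hdec t (interior_subset ht))
  have hpos_atTop : ∀ᶠ t in atTop, 0 < v t := (eventually_gt_atTop 0).mono hpos
  obtain ⟨s₀, hs₀⟩ := ((eventually_rpow_le_two_mul_sub_rpow hlim hpos_atTop hqr).and
    (eventually_gt_atTop 0)).exists_forall_of_atTop
  have hflux : ∀ᶠ σ in atTop,
      (1 / 2) ^ ((N : ℝ) - 1 + 1) / 2 * σ * v σ ^ (q - 1) ≤ (-v' σ) ^ (p - 1) :=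
    eventually_atTop.2 ⟨2 * s₀, fun σ hσ => mul_rpow_le_neg_deriv_rpow ha (by linarith)
      (hs₀ s₀ le_rfl).2 hσ hpos hanti hdec (fun t ht => (hs₀ t ht).1) hODE⟩
  obtain ⟨C, hC⟩ := exists_eventually_le_mul_rpow_of_mul_le_neg_deriv_rpow (by positivity) hp1
    hpq ((eventually_gt_atTop 0).mono hderiv) hpos_atTop ((eventually_gt_atTop 0).mono hdec) hflux
  obtain ⟨c, hc, hdecay⟩ := exists_pos_forall_le_mul_rpow_of_eventually
    (div_nonneg (by linarith) (by linarith)) (hanti.mono (Ici_subset_Ioi.2 one_pos)) hC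
  exact ⟨c, hc, fun x hx => hrad x ▸ hdecay _ hx⟩

/-- decay estimate for radially symmetric, radially decreasing positive
solutions of `−Δ_p u + u^{r−1} = u^{q−1}` vanishing at infinity: `u(x) ≤ c|x|^{−p/(q−p)}`
for `|x| ≥ 1`. In radial form `u(x) = v(|x|)` the equation reads
`(s^{N−1}(−v')^{p−1})' = s^{N−1}(v^{q−1} − v^{r−1})`. -/
theorem stmt_14 (N : ℕ) (p q r : ℝ) (hN : 2 ≤ N)
    (hp1 : 1 < p) (hpN : p < N) (hpq : p < q) (hqr : q < r)
    (hr : r < (N : ℝ) * p / ((N : ℝ) - p))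
    (u : EuclideanSpace ℝ (Fin N) → ℝ) (v v' : ℝ → ℝ)
    (hrad : ∀ x, u x = v ‖x‖)
    (hderiv : ∀ s, 0 < s → HasDerivAt v (v' s) s)
    (hpos : ∀ s, 0 < s → 0 < v s)
    (hdec : ∀ s, 0 < s → v' s ≤ 0)
    (hlim : Filter.Tendsto v Filter.atTop (nhds 0))
    (hODE : ∀ s, 0 < s →
      HasDerivAt (fun t => t ^ ((N : ℝ) - 1) * (-(v' t)) ^ (p - 1))
        (s ^ ((N : ℝ) - 1) * (v s ^ (q - 1) - v s ^ (r - 1))) s) :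
    ∃ c : ℝ, 0 < c ∧ ∀ x : EuclideanSpace ℝ (Fin N), 1 ≤ ‖x‖ →
      u x ≤ c * ‖x‖ ^ (-(p / (q - p))) :=
  stmt_14_general N p q r hN hp1 hpq hqr u v v' hrad hderiv hpos hdec hlim hODE
end
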